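/- Let ι : A → H be an inclusion of Hopf algebras, and let π : H → C := H/HA⁻ be the quotient by the ideal generated by the augmentation ideal A⁻ = A ∩ ker ε. Then the left adjoint coaction x ↦ x₁ S(x₃) ⊗ x₂ of H on itself descends through π to a coaction of H on C. -/

import Mathlib

open TensorProduct

variable {k A H : Type*}

/-- The left adjoint coaction `x ↦ x₁ S(x₃) ⊗ x₂` of a Hopf algebra on itself. -/
noncomputable def leftAdjointCoaction [CommSemiring k] [Semiring H] [HopfAlgebra k H] :
    H →ₗ[k] H ⊗[k] H :=
  TensorProduct.map (LinearMap.mul' k H) LinearMap.id ∘ₗ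
    (TensorProduct.assoc k H H H).symm.toLinearMap ∘ₗ
    TensorProduct.map LinearMap.id
      (TensorProduct.map (HopfAlgebra.antipode (R := k)) LinearMap.id) ∘ₗ
    TensorProduct.map LinearMap.id (TensorProduct.comm k H H).toLinearMap ∘ₗ
    TensorProduct.map LinearMap.id (Coalgebra.comul (R := k)) ∘ₗ
    Coalgebra.comul (R := k)


/-! In Sweedler notation, for `a ∈ A` with `ε a = 0`,
`(id ⊗ π) β(h ι(a)) = h₁ ι(a₁) S(ι(a₃)) S(h₃) ⊗ π(h₂ ι(a₂))`, and `π(h₂ ι(a₂)) = ε(a₂) π(h₂)`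
because `h₂ ι(a₂ - ε(a₂))` lies in `H A⁻`. Absorbing `ε(a₂)` leaves `ι(a₁) S(ι(a₂)) = ε(a) = 0`,
so `(id ⊗ π) ∘ β` vanishes on `H A⁻` and factors through `C`. -/

open Coalgebra HopfAlgebra

section
variable [CommSemiring k] [Semiring H] [HopfAlgebra k H]

lemma leftAdjointCoaction_apply_eq_sum {ι : Type*} {κ : ι → Type*} {x : H} (r : Repr k x ι)
    (r₂ : ∀ i, Repr k (r.right i) (κ i)) :
    leftAdjointCoaction (k := k) x = ∑ i ∈ r.index, ∑ j ∈ (r₂ i).index,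
      (r.left i * antipode k ((r₂ i).right j)) ⊗ₜ[k] (r₂ i).left j := by
  simp only [leftAdjointCoaction, LinearMap.coe_comp, Function.comp_apply, ← r.eq, map_sum,
    TensorProduct.map_tmul, LinearMap.id_coe, id_eq, ← (r₂ _).eq, TensorProduct.tmul_sum]
  simp

lemma leftAdjointCoaction_mul_apply_eq_sum {ι κ ι' κ' : Type*} {x y : H} (rx : Repr k x ι)
    (rx₂ : ∀ i, Repr k (rx.right i) ι') (ry : Repr k y κ) (ry₂ : ∀ j, Repr k (ry.right j) κ') :
    leftAdjointCoaction (k := k) (x * y) =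
      ∑ i ∈ rx.index, ∑ j ∈ ry.index, ∑ p ∈ (rx₂ i).index, ∑ q ∈ (ry₂ j).index,
        (rx.left i * ry.left j * (antipode k ((ry₂ j).right q) * antipode k ((rx₂ i).right p)))
          ⊗ₜ[k] ((rx₂ i).left p * (ry₂ j).left q) := by
  simp only [leftAdjointCoaction, LinearMap.coe_comp, Function.comp_apply, Bialgebra.comul_mul,
    ← rx.eq, ← ry.eq, Finset.sum_mul_sum, Algebra.TensorProduct.tmul_mul_tmul, map_sum,
    TensorProduct.map_tmul, LinearMap.id_coe, id_eq, ← (rx₂ _).eq,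
    ← (ry₂ _).eq, TensorProduct.tmul_sum]
  simp [antipode_mul_antidistrib]

lemma map_leftAdjointCoaction_mul_coalgHom [AddCommMonoid A] [Module k A] [Coalgebra k A]
    {M F : Type*} [AddCommMonoid M] [Module k M] [FunLike F A H] [CoalgHomClass F k A H] (f : F)
    (p : H →ₗ[k] M) (hp : ∀ x b, p (x * f b) = counit (R := k) b • p x) (x : H) (a : A) :
    TensorProduct.map LinearMap.id p (leftAdjointCoaction (k := k) (x * f a)) =
      counit (R := k) a • TensorProduct.map LinearMap.id p (leftAdjointCoaction (k := k) x) := by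
  let rx := ℛ k x
  let rx₂ i := ℛ k (rx.right i)
  let ra := ℛ k a
  let ra₂ j := ℛ k (ra.right j)
  rw [leftAdjointCoaction_mul_apply_eq_sum rx rx₂ (ra.induced f) fun j ↦ (ra₂ j).induced f,
    leftAdjointCoaction_apply_eq_sum rx rx₂]
  simp only [map_sum, TensorProduct.map_tmul, LinearMap.id_coe, id_eq, Repr.induced_index,
    Repr.induced_left, Repr.induced_right, Function.comp_apply, hp]
  have h_counit (b : A) (rb : Repr k b (A × A)) (u v : H) (m : M) :
      ∑ q ∈ rb.index, (u * (antipode k (f (rb.right q)) * v)) ⊗ₜ[k] (counit (R := k) (rb.left q) • m)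
        = (u * antipode k (f b) * v) ⊗ₜ[k] m := by
    have := congrArg ((TensorProduct.mk k H M).flip m ∘ₗ LinearMap.mulLeft k u ∘ₗ
      LinearMap.mulRight k v ∘ₗ antipode k ∘ₗ (f : A →ₗ[k] H)) (sum_counit_smul rb)
    simpa [TensorProduct.smul_tmul', mul_assoc] using this
  have h_antipode : ∑ j ∈ ra.index, f (ra.left j) * antipode k (f (ra.right j)) =
      counit (R := k) a • 1 := by
    simpa using sum_mul_antipode_eq_smul (ra.induced f)
  simp only [h_counit, Finset.smul_sum]
  refine Finset.sum_congr rfl fun i _ ↦ ?_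
  rw [Finset.sum_comm]
  refine Finset.sum_congr rfl fun q _ ↦ ?_
  simp only [← TensorProduct.sum_tmul, ← Finset.sum_mul, mul_assoc (rx.left i), ← Finset.mul_sum,
    h_antipode, TensorProduct.smul_tmul', mul_smul_comm, smul_mul_assoc, one_mul]

end

lemma Submodule.mkQ_mul_algHom_eq_counit_smul [CommRing k] [Ring A] [Ring H] [Bialgebra k A]
    [Algebra k H] {F : Type*} [FunLike F A H] [AlgHomClass F k A H] (ι : F) {I : Submodule k H}
    (hI : ∀ x a, counit (R := k) a = 0 → x * ι a ∈ I) (x : H) (b : A) :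
    I.mkQ (x * ι b) = counit (R := k) b • I.mkQ x := by
  have hb : counit (R := k) (b - counit (R := k) b • 1) = 0 := by simp
  have := hI x _ hb
  rw [map_sub, map_smul, map_one, mul_sub, mul_smul_comm, mul_one] at this
  rw [← map_smul, ← sub_eq_zero, ← map_sub]
  exact (Submodule.Quotient.mk_eq_zero I).2 this

theorem leftAdjointCoaction_descends_general [Field k] [Ring A] [Ring H]
    [HopfAlgebra k A] [HopfAlgebra k H]
    (ι : A →ₐc[k] H) :
    let I : Submodule k H :=
      Submodule.span k {y : H | ∃ h : H, ∃ a : A,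
        Coalgebra.counit (R := k) a = 0 ∧ y = h * ι a}
    ∃ β' : (H ⧸ I) →ₗ[k] H ⊗[k] (H ⧸ I),
      β' ∘ₗ I.mkQ = TensorProduct.map LinearMap.id I.mkQ ∘ₗ leftAdjointCoaction (k := k) := by
  intro I
  have hπ := I.mkQ_mul_algHom_eq_counit_smul ι
    fun x a ha ↦ Submodule.subset_span ⟨x, a, ha, rfl⟩
  have hI : I ≤ LinearMap.ker (TensorProduct.map LinearMap.id I.mkQ ∘ₗ leftAdjointCoaction) := by
    refine Submodule.span_le.2 ?_
    rintro _ ⟨h, a, ha, rfl⟩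
    simp [map_leftAdjointCoaction_mul_coalgHom ι I.mkQ hπ, ha]
  exact ⟨I.liftQ _ hI, I.liftQ_mkQ _ hI⟩

/-- Let `ι : A → H` be an inclusion of Hopf algebras, `I = H·A⁻` the left ideal generated
by the augmentation ideal of `A`, and `π : H → C = H/I` the quotient. Then the left adjoint
coaction `x ↦ x₁ S(x₃) ⊗ x₂` of `H` on itself descends through `π` to a coaction of `H`
on `C`. -/
theorem leftAdjointCoaction_descends [Field k] [Ring A] [Ring H]
    [HopfAlgebra k A] [HopfAlgebra k H]
    (ι : A →ₐc[k] H) (hι : Function.Injective ι) :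
    let I : Submodule k H :=
      Submodule.span k {y : H | ∃ h : H, ∃ a : A,
        Coalgebra.counit (R := k) a = 0 ∧ y = h * ι a}
    ∃ β' : (H ⧸ I) →ₗ[k] H ⊗[k] (H ⧸ I),
      β' ∘ₗ I.mkQ = TensorProduct.map LinearMap.id I.mkQ ∘ₗ leftAdjointCoaction (k := k) :=
  leftAdjointCoaction_descends_general ι
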